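/- arXiv:2009.09946 — 2 statements merged into one kernel-verified Lean document; each statement's English description precedes it below -/
import Mathlib

section
/- Consider the majority game on the complete simple graph with n ≥ 2 nodes. No subset of players of cardinality strictly smaller than ⌊n/2⌋ is a sufficient control set; hence every subset of cardinality ⌊n/2⌋ is an optimal sufficient control set. -/
open Finset

/-- The indicator strategy profile `𝟙_S` of a set of players `S`: action `1` (here `true`)
on `S` and `0` (here `false`) elsewhere. -/
def indicator {V : Type*} [DecidableEq V] (S : Finset V) : V → Bool :=
  fun i => decide (i ∈ S)

/-- A finite binary-action game with utilities `u` is super-modular (has increasing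
differences) if for every player `i` and profiles `x, y` with `x_{-i} ≥ y_{-i}`
componentwise, `u_i(1, x_{-i}) − u_i(0, x_{-i}) ≥ u_i(1, y_{-i}) − u_i(0, y_{-i})`. -/
def Supermodular {V : Type*} [DecidableEq V] (u : V → (V → Bool) → ℝ) : Prop :=
  ∀ (i : V) (x y : V → Bool), (∀ j, j ≠ i → y j ≤ x j) →
    u i (Function.update y i true) - u i (Function.update y i false) ≤
      u i (Function.update x i true) - u i (Function.update x i false)

/-- An improvement path from `S` to `T`: a sequence of profiles starting at `𝟙_S` and ending
at `𝟙_T` such that at each step some player `i ∉ S` flips her action (the profile changes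
exactly in coordinate `i`) without decreasing her utility. -/
def IsImprovementPath {V : Type*} [Fintype V] [DecidableEq V]
    (u : V → (V → Bool) → ℝ) (S T : Finset V) : Prop :=
  ∃ (m : ℕ) (x : ℕ → V → Bool),
    x 0 = indicator S ∧ x m = indicator T ∧
    ∀ k < m, ∃ i, i ∉ S ∧
      x (k + 1) = Function.update (x k) i (!(x k i)) ∧
      u i (x k) ≤ u i (x (k + 1))

/-- `S` is a sufficient control set if there is an improvement path from `S` to the whole
player set `V`. -/
def SufficientControlSet {V : Type*} [Fintype V] [DecidableEq V]
    (u : V → (V → Bool) → ℝ) (S : Finset V) : Prop :=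
  IsImprovementPath u S Finset.univ

/-- Utilities of the majority game on a finite simple undirected graph `G`: the utility of
player `i` at profile `x` is the number of neighbors `j` of `i` with `x_j = x_i`. -/
def majU {V : Type*} [Fintype V] [DecidableEq V] (G : SimpleGraph V) [DecidableRel G.Adj] :
    V → (V → Bool) → ℝ :=
  fun i x => ((G.neighborFinset i).filter (fun j => x j = x i)).card

/-!
On the complete graph a player's majority-game utility only depends on how many players play
`1`. A player at `0` may switch to `1` exactly when at least half of the others play `1`, and a
switch from `1` to `0` never raises that number. Hence, if fewer than `⌊n/2⌋` players play `1`
at the start, no improvement path ever reaches the all-`1` profile; from `⌊n/2⌋` (or more)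
players at `1`, the remaining players can switch to `1` one at a time.
-/

section

variable {V : Type*}

theorem indicator_insert [DecidableEq V] (i : V) (S : Finset V) :
    indicator (insert i S) = Function.update (indicator S) i true := by
  funext j
  by_cases hj : j = i
  · subst hj; simp [indicator]
  · simp [indicator, hj]

section NumTrue

variable [Fintype V]

def numTrue (x : V → Bool) : ℕ := #{j | x j = true}

theorem numTrue_le_card (x : V → Bool) : numTrue x ≤ Fintype.card V :=
  card_filter_le _ _

theorem card_filter_false_eq_card_sub_numTrue (x : V → Bool) :
    #{j | x j = false} = Fintype.card V - numTrue x := by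
  have := card_filter_add_card_filter_not (s := univ) (p := fun j => x j = true)
  simp only [Bool.not_eq_true, card_univ] at this
  rw [numTrue]
  omega

variable [DecidableEq V]

theorem numTrue_indicator (S : Finset V) : numTrue (indicator S) = #S := by
  simp [numTrue, indicator]

theorem numTrue_update_false_le (x : V → Bool) (i : V) :
    numTrue (Function.update x i false) ≤ numTrue x := by
  refine card_le_card fun j => ?_
  by_cases hj : j = i
  · subst hj; simp
  · simp [hj]

end NumTrue

variable [Fintype V] [DecidableEq V]

section ImprovementPath

variable {u : V → (V → Bool) → ℝ} {S T : Finset V}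

theorem IsImprovementPath.refl (u : V → (V → Bool) → ℝ) (S : Finset V) :
    IsImprovementPath u S S :=
  ⟨0, fun _ => indicator S, rfl, rfl, fun _ hk => absurd hk (Nat.not_lt_zero _)⟩

theorem IsImprovementPath.cons {i : V} (hi : i ∉ S)
    (hu : u i (indicator S) ≤ u i (indicator (insert i S)))
    (h : IsImprovementPath u (insert i S) T) : IsImprovementPath u S T := by
  obtain ⟨m, x, hx0, hxm, hx⟩ := h
  refine ⟨m + 1, Nat.rec (indicator S) fun k _ => x k, rfl, hxm, ?_⟩
  rintro (_ | k) hk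
  · have hflip : indicator (insert i S) = Function.update (indicator S) i (!indicator S i) := by
      simp [indicator_insert, indicator, hi]
    refine ⟨i, hi, hx0.trans hflip, ?_⟩
    show u i (indicator S) ≤ u i (x 0)
    rwa [hx0]
  · obtain ⟨j, hj, hstep⟩ := hx k (by omega)
    exact ⟨j, fun hjS => hj (mem_insert_of_mem hjS), hstep⟩

theorem IsImprovementPath.induction (P : (V → Bool) → Prop) (h : IsImprovementPath u S T)
    (h0 : P (indicator S))
    (hstep : ∀ x i, i ∉ S → u i x ≤ u i (Function.update x i (!x i)) → P x →
      P (Function.update x i (!x i))) :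
    P (indicator T) := by
  obtain ⟨m, x, hx0, hxm, hx⟩ := h
  suffices ∀ k ≤ m, P (x k) from hxm ▸ this m le_rfl
  intro k hk
  induction k with
  | zero => exact hx0 ▸ h0
  | succ k ih =>
    obtain ⟨i, hi, hxk, hu⟩ := hx k (by omega)
    rw [hxk] at hu ⊢
    exact hstep _ i hi hu (ih (by omega))

end ImprovementPath

section CompleteGraph

theorem majU_top_apply (i : V) (x : V → Bool) :
    majU (⊤ : SimpleGraph V) i x = #{j ∈ univ.erase i | x j = x i} := by
  simp only [majU, SimpleGraph.neighborFinset_top, compl_singleton]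

theorem majU_top_of_eq_false {i : V} {x : V → Bool} (hxi : x i = false) :
    majU (⊤ : SimpleGraph V) i x = (Fintype.card V - numTrue x - 1 : ℕ) := by
  rw [majU_top_apply, hxi, filter_erase, card_erase_of_mem (by simp [hxi]),
    card_filter_false_eq_card_sub_numTrue]

theorem majU_top_update_true {i : V} {x : V → Bool} (hxi : x i = false) :
    majU (⊤ : SimpleGraph V) i (Function.update x i true) = numTrue x := by
  rw [majU_top_apply, numTrue, Function.update_self]
  congr 2
  ext j
  by_cases hj : j = i
  · subst hj; simp [hxi]
  · simp [hj]

theorem majU_top_le_update_true_iff {i : V} {x : V → Bool} (hxi : x i = false) :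
    majU (⊤ : SimpleGraph V) i x ≤ majU (⊤ : SimpleGraph V) i (Function.update x i true) ↔
      Fintype.card V ≤ 2 * numTrue x + 1 := by
  rw [majU_top_of_eq_false hxi, majU_top_update_true hxi, Nat.cast_le]
  have := numTrue_le_card x
  omega

theorem numTrue_lt_half_of_improving_flip {i : V} {x : V → Bool}
    (hu : majU (⊤ : SimpleGraph V) i x ≤
      majU (⊤ : SimpleGraph V) i (Function.update x i (!x i)))
    (hx : numTrue x < Fintype.card V / 2) :
    numTrue (Function.update x i (!x i)) < Fintype.card V / 2 := by
  cases hxi : x i with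
  | false =>
    rw [hxi, Bool.not_false, majU_top_le_update_true_iff hxi] at hu
    omega
  | true => exact (numTrue_update_false_le x i).trans_lt hx

theorem not_sufficientControlSet_top_of_card_lt {S : Finset V}
    (hS : #S < Fintype.card V / 2) :
    ¬ SufficientControlSet (majU (⊤ : SimpleGraph V)) S := by
  intro h
  have := h.induction (fun x => numTrue x < Fintype.card V / 2)
    (by rwa [numTrue_indicator]) fun _ _ _ hu hx => numTrue_lt_half_of_improving_flip hu hx
  rw [numTrue_indicator, card_univ] at this
  omega

theorem sufficientControlSet_top_of_card_le {S : Finset V}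
    (hS : Fintype.card V ≤ 2 * #S + 1) :
    SufficientControlSet (majU (⊤ : SimpleGraph V)) S := by
  refine strongDownwardInductionOn (n := Fintype.card V)
    (p := fun S => Fintype.card V ≤ 2 * #S + 1 → SufficientControlSet (majU ⊤) S)
    S (fun S ih _ hS => ?_) (card_le_univ S) hS
  by_cases hS_univ : S = univ
  · exact hS_univ ▸ IsImprovementPath.refl _ _
  obtain ⟨i, -, hiS⟩ := exists_of_ssubset (ssubset_univ_iff.mpr hS_univ)
  refine IsImprovementPath.cons hiS ?_ (ih (card_le_univ _) (ssubset_insert hiS)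
    (by rw [card_insert_of_notMem hiS]; omega))
  rwa [indicator_insert, majU_top_le_update_true_iff (by simp [indicator, hiS]),
    numTrue_indicator]

end CompleteGraph

end

theorem complete_graph_half_optimal_general
    {V : Type*} [Fintype V] [DecidableEq V] (n : ℕ)
    (hcard : Fintype.card V = n) :
    (∀ S : Finset V, S.card < n / 2 →
        ¬ SufficientControlSet (majU (⊤ : SimpleGraph V)) S) ∧
    (∀ S : Finset V, S.card = n / 2 →
        SufficientControlSet (majU (⊤ : SimpleGraph V)) S ∧
        ∀ T : Finset V, SufficientControlSet (majU (⊤ : SimpleGraph V)) T →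
          S.card ≤ T.card) := by
  subst hcard
  refine ⟨fun S hS => not_sufficientControlSet_top_of_card_lt hS, fun S hS => ⟨?_, ?_⟩⟩
  · exact sufficientControlSet_top_of_card_le (by omega)
  · intro T hT
    by_contra! hlt
    exact not_sufficientControlSet_top_of_card_lt (hS ▸ hlt) hT

/-- For the majority game on the complete simple graph with `n ≥ 2` nodes, no subset of
players of cardinality strictly smaller than `⌊n/2⌋` is a sufficient control set; hence
every subset of cardinality `⌊n/2⌋` is an optimal sufficient control set. -/
theorem complete_graph_half_optimal
    {V : Type*} [Fintype V] [DecidableEq V] (n : ℕ) (hn : 2 ≤ n)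
    (hcard : Fintype.card V = n) :
    (∀ S : Finset V, S.card < n / 2 →
        ¬ SufficientControlSet (majU (⊤ : SimpleGraph V)) S) ∧
    (∀ S : Finset V, S.card = n / 2 →
        SufficientControlSet (majU (⊤ : SimpleGraph V)) S ∧
        ∀ T : Finset V, SufficientControlSet (majU (⊤ : SimpleGraph V)) T →
          S.card ≤ T.card) :=
  complete_graph_half_optimal_general n hcard
end

section
/- In a finite super-modular game with binary actions, a subset S ⊆ V is a sufficient control set if and only if the profile 𝟙_S belongs to the reachable set Z, i.e., if and only if there exists a finite sequence of profiles y^0 = 𝟙 (the all-ones profile), y^1, …, y^l = 𝟙_S such that for each k, y^k = y^{k−1} − δ_{i_k} for some player i_k with u_{i_k}(y^k) ≤ u_{i_k}(y^{k−1}). -/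
open Finset

/-- The reachable set `Z`: a profile `x` belongs to `Z` if there is a finite sequence of
profiles starting from the all-ones profile `𝟙` and ending at `x` in which, at each step,
some player `i` playing `1` switches to `0` (the profile decreases by `δ_i`) without
increasing her utility (`u_i(y^k) ≤ u_i(y^{k−1})`). -/
def ReachableFromTop {V : Type*} [DecidableEq V] (u : V → (V → Bool) → ℝ)
    (x : V → Bool) : Prop :=
  ∃ (l : ℕ) (y : ℕ → V → Bool),
    y 0 = (fun _ => true) ∧ y l = x ∧
    ∀ k < l, ∃ i, y k i = true ∧ y (k + 1) = Function.update (y k) i false ∧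
      u i (y (k + 1)) ≤ u i (y k)

/-!
Reversing a downward path from `𝟙` to `𝟙_S` gives an improvement path from `𝟙_S` to `𝟙`:
a player switched off along a downward path stays off, hence lies outside `S`. Conversely,
push an improvement path `𝟙_S = x⁰, …, xᵐ = 𝟙` up to its running suprema
`zᵏ = x⁰ ⊔ ⋯ ⊔ xᵏ`. Each step of `z` either stutters or switches on one player `i` who gains
by switching on at `xᵏ ≤ zᵏ`; by increasing differences she also gains at `zᵏ`. Read backwards,
`z` is a downward path from `𝟙` to `𝟙_S`.
-/

open Relation

theorem reflTransGen_iff_exists_seq {α : Type*} {r : α → α → Prop} {a b : α} :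
    ReflTransGen r a b ↔
      ∃ (n : ℕ) (f : ℕ → α), f 0 = a ∧ f n = b ∧ ∀ k < n, r (f k) (f (k + 1)) := by
  constructor
  · intro h
    induction h with
    | refl => exact ⟨0, fun _ => a, rfl, rfl, by simp⟩
    | @tail b c _ hbc ih =>
      obtain ⟨n, f, hf0, hfn, hf⟩ := ih
      refine ⟨n + 1, fun k => if k ≤ n then f k else c, by simpa using hf0, by simp, ?_⟩
      intro k hk
      rcases Nat.lt_or_eq_of_le (Nat.le_of_lt_succ hk) with hk | rfl
      · simpa [hk.le, Nat.succ_le_of_lt hk] using hf k hk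
      · simpa [hfn] using hbc
  · rintro ⟨n, f, rfl, rfl, hf⟩
    exact ReflTransGen.lift f (r := fun k l => r (f k) (f l)) (fun _ _ => id) 0 n
      (reflTransGen_of_succ_of_le _ (fun k hk => hf k hk.2) n.zero_le)

section

variable {V : Type*} [DecidableEq V] (u : V → (V → Bool) → ℝ)

def DownStep (x y : V → Bool) : Prop :=
  ∃ i, x i = true ∧ y = Function.update x i false ∧ u i y ≤ u i x

def ImprovementStep (S : Finset V) (x y : V → Bool) : Prop :=
  ∃ i, i ∉ S ∧ y = Function.update x i (!x i) ∧ u i x ≤ u i y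

theorem reachableFromTop_iff_reflTransGen {x : V → Bool} :
    ReachableFromTop u x ↔ ReflTransGen (DownStep u) (fun _ => true) x := by
  rw [reflTransGen_iff_exists_seq]; rfl

theorem isImprovementPath_iff_reflTransGen [Fintype V] {S T : Finset V} :
    IsImprovementPath u S T ↔ ReflTransGen (ImprovementStep u S) (indicator S) (indicator T) := by
  rw [reflTransGen_iff_exists_seq]; rfl

variable {u}

theorem DownStep.le {x y : V → Bool} (h : DownStep u x y) : y ≤ x := by
  obtain ⟨i, -, rfl, -⟩ := h
  exact update_le_iff.mpr ⟨Bool.false_le _, fun _ _ => le_rfl⟩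

theorem le_of_reflTransGen_downStep {x y : V → Bool} (h : ReflTransGen (DownStep u) x y) :
    y ≤ x := by
  induction h with
  | refl => exact le_rfl
  | tail _ hbc ih => exact hbc.le.trans ih

theorem reflTransGen_improvementStep_of_downStep {S : Finset V} {x : V → Bool}
    (h : ReflTransGen (DownStep u) x (indicator S)) :
    ReflTransGen (ImprovementStep u S) (indicator S) x := by
  induction h using ReflTransGen.head_induction_on with
  | refl => exact .refl
  | @head x y hxy hy ih =>
    refine ih.tail ?_
    obtain ⟨i, hxi, rfl, hi⟩ := hxy
    have hiS : i ∉ S := by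
      simpa [indicator, Bool.le_iff_imp] using le_of_reflTransGen_downStep hy i
    exact ⟨i, hiS, by simp [hxi], hi⟩

namespace Supermodular

theorem le_update_true (hu : Supermodular u) {x z : V → Bool} (hxz : x ≤ z) {i : V}
    (hxi : x i = false) (hzi : z i = false) (h : u i x ≤ u i (Function.update x i true)) :
    u i z ≤ u i (Function.update z i true) := by
  have hx : Function.update x i false = x := Function.update_eq_self_iff.mpr hxi.symm
  have hz : Function.update z i false = z := Function.update_eq_self_iff.mpr hzi.symm
  have := hu i z x fun j _ => hxz j
  rw [hx, hz] at this
  linarith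

theorem reflGen_downStep_sup (hu : Supermodular u) {S : Finset V} {x x' z : V → Bool}
    (hxz : x ≤ z) (h : ImprovementStep u S x x') : ReflGen (DownStep u) (z ⊔ x') z := by
  obtain ⟨i, -, rfl, hi⟩ := h
  by_cases hle : Function.update x i (!x i) ≤ z
  · rw [sup_eq_left.mpr hle]
  have hxzi : x i = false ∧ z i = false := by
    contrapose! hle
    refine update_le_iff.mpr ⟨?_, fun j _ => hxz j⟩
    cases hx : x i <;> cases hz : z i <;> simp_all
  simp only [hxzi.1, Bool.not_false] at hi ⊢
  have hsup : z ⊔ Function.update x i true = Function.update z i true := by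
    funext j
    rcases eq_or_ne j i with rfl | hj
    · simp
    · simp [hj, sup_eq_left.mpr (hxz j)]
  rw [hsup]
  refine .single ⟨i, by simp, by simp [hxzi.2], ?_⟩
  simpa [hxzi.2] using hu.le_update_true hxz hxzi.1 hxzi.2 hi

theorem exists_downStep_path_of_improvementStep_path (hu : Supermodular u) {S : Finset V}
    {a b : V → Bool} (h : ReflTransGen (ImprovementStep u S) a b) {z : V → Bool}
    (hz : a ≤ z) : ∃ w, b ≤ w ∧ ReflTransGen (DownStep u) w z := by
  induction h using ReflTransGen.head_induction_on generalizing z with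
  | refl => exact ⟨z, hz, .refl⟩
  | @head a c hac _ ih =>
    obtain ⟨w, hbw, hw⟩ := ih (le_sup_right : c ≤ z ⊔ c)
    exact ⟨w, hbw, hw.trans (reflGen_le_reflTransGen _ _ (hu.reflGen_downStep_sup hz hac))⟩

end Supermodular

end

/-- In a finite super-modular game with binary actions, `S ⊆ V` is a sufficient control
set if and only if the profile `𝟙_S` belongs to the reachable set `Z`, i.e. iff `𝟙_S` can
be reached from the all-ones profile by successively switching single players from `1` to
`0` without increasing their utilities. -/
theorem sufficient_iff_reachable
    {V : Type*} [Fintype V] [DecidableEq V]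
    (u : V → (V → Bool) → ℝ) (hu : Supermodular u) (S : Finset V) :
    SufficientControlSet u S ↔ ReachableFromTop u (indicator S) := by
  have hV : indicator (univ : Finset V) = fun _ => true := funext fun _ => by simp [indicator]
  rw [SufficientControlSet, isImprovementPath_iff_reflTransGen,
    reachableFromTop_iff_reflTransGen, hV]
  refine ⟨fun h => ?_, reflTransGen_improvementStep_of_downStep⟩
  obtain ⟨w, hw, hpath⟩ := hu.exists_downStep_path_of_improvementStep_path h le_rfl
  obtain rfl : w = fun _ => true := top_unique hw
  exact hpath
end
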